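/- arXiv:math/0405221 — 2 statements merged into one kernel-verified Lean document; each statement's English description precedes it below -/
import Mathlib

section
/- Let r ≥ 3 be a natural number, k ≤ l natural numbers with k ≥ 2, and c_k, ..., c_l nonnegative integers with c_k ≥ 1 and A := ∑_{i=k}^{l} i·c_i < r/3. Set d = 3r - 4 - ∑_{i=k}^{l} 3(i-1)c_i. Then there is no natural number m with 1 < m ≤ (d+3)/2 such that simultaneously r - ∑_{i=k}^{l} 3(i-1)c_i ≤ m and m(d+3-m) - 2 < ((2r-1)/3)(r - 3A). -/
open Finset in
/-- Let `r ≥ 3`, `2 ≤ k ≤ l`, and nonnegative integers `c k, …, c l` with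
`c k ≥ 1` and `A = ∑_{i=k}^{l} i * c i < r/3`. With
`d = 3r - 4 - ∑ 3(i-1) c i`, there is no natural number `m` with
`1 < m ≤ (d+3)/2` such that simultaneously `r - ∑ 3(i-1) c i ≤ m` and
`m(d+3-m) - 2 < ((2r-1)/3) * (r - 3A)`. -/
theorem stmt5 (r k l : ℕ) (c : ℕ → ℕ) (hr : 3 ≤ r) (hk : 2 ≤ k) (hkl : k ≤ l)
    (hck : 1 ≤ c k)
    (hsum : (∑ i ∈ Icc k l, (i : ℝ) * c i) < (r : ℝ) / 3) :
    ¬ ∃ m : ℕ, 1 < m ∧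
      (m : ℝ) ≤ ((3 * (r : ℝ) - 4 - ∑ i ∈ Icc k l, 3 * ((i : ℝ) - 1) * c i) + 3) / 2 ∧
      (r : ℝ) - ∑ i ∈ Icc k l, 3 * ((i : ℝ) - 1) * c i ≤ (m : ℝ) ∧
      (m : ℝ) * ((3 * (r : ℝ) - 4 - ∑ i ∈ Icc k l, 3 * ((i : ℝ) - 1) * c i) + 3 - m) - 2 <
        (2 * (r : ℝ) - 1) / 3 * ((r : ℝ) - 3 * ∑ i ∈ Icc k l, (i : ℝ) * c i) := by
  rintro ⟨m, hm1, hm2, hm3, hm4⟩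
  set A : ℝ := ∑ i ∈ Icc k l, (i : ℝ) * c i with hA
  set S : ℝ := ∑ i ∈ Icc k l, 3 * ((i : ℝ) - 1) * c i with hS
  set C : ℝ := ((∑ i ∈ Icc k l, c i : ℕ) : ℝ) with hC
  -- S = 3A - 3C
  have hSAC : S = 3 * A - 3 * C := by
    rw [hS, hA, hC]
    push_cast
    rw [Finset.mul_sum, Finset.mul_sum, ← Finset.sum_sub_distrib]
    exact Finset.sum_congr rfl fun i _ => by ring
  -- C ≥ 1
  have hC1 : (1 : ℝ) ≤ C := by
    rw [hC]
    have : 1 ≤ ∑ i ∈ Icc k l, c i :=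
      le_trans hck (Finset.single_le_sum (fun i _ => Nat.zero_le _)
        (Finset.mem_Icc.mpr ⟨le_refl k, hkl⟩))
    exact_mod_cast this
  -- r - 3A ≥ 1
  have hAnat : A = ((∑ i ∈ Icc k l, i * c i : ℕ) : ℝ) := by rw [hA]; push_cast; ring
  have hrA : (1 : ℝ) ≤ (r : ℝ) - 3 * A := by
    set N : ℕ := ∑ i ∈ Icc k l, i * c i with hN
    have h1 : 3 * (N : ℝ) < r := by rw [← hAnat] at *; linarith [hsum]
    have h2 : 3 * N < r := by exact_mod_cast h1
    have h3 : 3 * N + 1 ≤ r := h2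
    have : ((3 * N + 1 : ℕ) : ℝ) ≤ r := by exact_mod_cast h3
    push_cast at this
    linarith
  have hm1' : (2 : ℝ) ≤ m := by exact_mod_cast hm1
  have hr' : (3 : ℝ) ≤ r := by exact_mod_cast hr
  nlinarith [mul_nonneg (sub_nonneg.mpr hm3)
      (by linarith : (0:ℝ) ≤ (3 * (r:ℝ) - 4 - S + 3) - (m:ℝ) - ((r:ℝ) - S)),
    mul_nonneg (by linarith : (0:ℝ) ≤ 2*(r:ℝ)-1) (by linarith : (0:ℝ) ≤ C - 1),
    mul_nonneg (by linarith : (0:ℝ) ≤ 2*(r:ℝ)-1) (by linarith : (0:ℝ) ≤ (r:ℝ) - 3*A - 1)]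
end

section
/- Let n ≥ 4 be a natural number, A and B nonnegative integers with B ≥ 1 and 4A < n - 1. Then the inequalities n - 1 - 4(A - B) ≤ m ≤ (d+3)/2 and m(d+3-m) - 2 < ((n-1)/4)(n-1-4A), where d = 2n-5-4(A-B), cannot hold simultaneously for any natural number m > 1. -/
/-- Let `n ≥ 4`, `A B : ℕ` with `B ≥ 1` and `4A < n - 1`. Set
`d = 2n - 5 - 4(A - B)`. Then there is no natural number `m > 1` with
`n - 1 - 4(A - B) ≤ m ≤ (d+3)/2` and `m(d+3-m) - 2 < ((n-1)/4)(n-1-4A)`. -/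
theorem stmt9 (n A B : ℕ) (hn : 4 ≤ n) (hB : 1 ≤ B) (hA : 4 * A < n - 1) :
    ¬ ∃ m : ℕ, 1 < m ∧
      (n : ℝ) - 1 - 4 * ((A : ℝ) - B) ≤ (m : ℝ) ∧
      (m : ℝ) ≤ ((2 * (n : ℝ) - 5 - 4 * ((A : ℝ) - B)) + 3) / 2 ∧
      (m : ℝ) * ((2 * (n : ℝ) - 5 - 4 * ((A : ℝ) - B)) + 3 - m) - 2 <
        ((n : ℝ) - 1) / 4 * ((n : ℝ) - 1 - 4 * A) := by
  rintro ⟨m, hm1, h2, h3, h4⟩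
  have hA' : 4 * A + 2 ≤ n := by omega
  have hAr : (4 : ℝ) * A + 2 ≤ (n : ℝ) := by exact_mod_cast hA'
  have hBr : (1 : ℝ) ≤ (B : ℝ) := by exact_mod_cast hB
  have hnr : (4 : ℝ) ≤ (n : ℝ) := by exact_mod_cast hn
  -- monotonicity: g(m) ≥ g(L) where L = n - 1 - 4(A - B)
  have key : ((n : ℝ) - 1 - 4 * ((A : ℝ) - B)) * ((n : ℝ) - 1) - 2 ≤
      (m : ℝ) * ((2 * (n : ℝ) - 5 - 4 * ((A : ℝ) - B)) + 3 - m) - 2 := by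
    nlinarith [sq_nonneg ((m : ℝ) - ((n : ℝ) - 1 - 4 * ((A : ℝ) - B))),
      mul_nonneg (sub_nonneg.2 h2)
        (by linarith : (0 : ℝ) ≤ (2 * (n : ℝ) - 5 - 4 * ((A : ℝ) - B)) + 3 - 2 * m)]
  have hlt : ((n : ℝ) - 1 - 4 * ((A : ℝ) - B)) * ((n : ℝ) - 1) - 2 <
      ((n : ℝ) - 1) / 4 * ((n : ℝ) - 1 - 4 * A) := lt_of_le_of_lt key h4
  nlinarith [mul_nonneg (by linarith : (0 : ℝ) ≤ (n : ℝ) - 1)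
      (by linarith : (0 : ℝ) ≤ (B : ℝ) - 1),
    mul_nonneg (by linarith : (0 : ℝ) ≤ (n : ℝ) - 4)
      (by linarith : (0 : ℝ) ≤ (n : ℝ) - 2 - 4 * A)]
end
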